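/- Let A ⟶f B ⟶g C ⟶h A⟦1⟧ be a distinguished triangle in C whose connecting morphism h satisfies both condition (Lex) and condition (Rex). If A belongs to N, then g belongs to S_N; and if C belongs to N, then f belongs to S_N. -/

import Mathlib

open CategoryTheory CategoryTheory.Limits CategoryTheory.Pretriangulated

universe v u v₂ u₂

variable {C : Type u} [Category.{v} C] [Preadditive C] [HasZeroObject C]
  [HasShift C ℤ] [∀ n : ℤ, (shiftFunctor C n).Additive] [Pretriangulated C]

/-- `f : X ⟶ Y` factors through an object of `N`. -/
def FactorsThru (N : Set C) {X Y : C} (f : X ⟶ Y) : Prop :=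
  ∃ (Z : C) (_ : Z ∈ N) (u : X ⟶ Z) (v : Z ⟶ Y), f = u ≫ v

/-- The morphism `X⟦-1⟧ ⟶ A` obtained from `h : X ⟶ A⟦1⟧` by shifting by `-1` and
composing with the canonical isomorphism `A⟦1⟧⟦-1⟧ ≅ A`. -/
noncomputable def descShift {X A : C} (h : X ⟶ A⟦(1:ℤ)⟧) : X⟦(-1:ℤ)⟧ ⟶ A :=
  h⟦(-1:ℤ)⟧' ≫ (shiftEquiv C (1:ℤ)).unitIso.inv.app A

/-- The class `S_N` of morphisms fitting in a distinguished triangle whose two other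
maps factor through `N`. -/
def SN (N : Set C) {B C₀ : C} (g : B ⟶ C₀) : Prop :=
  ∃ (A : C) (f : A ⟶ B) (h : C₀ ⟶ A⟦(1:ℤ)⟧),
    (Triangle.mk f g h ∈ distTriang C) ∧ FactorsThru N f ∧ FactorsThru N h

/-- The class `L`. -/
def ClassL (N : Set C) {A B : C} (f : A ⟶ B) : Prop :=
  ∃ (N₀ : C) (_ : N₀ ∈ N) (g : B ⟶ N₀) (h : N₀ ⟶ A⟦(1:ℤ)⟧),
    (Triangle.mk f g h ∈ distTriang C) ∧ FactorsThru N (descShift h)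

/-- The class `R`. -/
def ClassR (N : Set C) {B C₀ : C} (g : B ⟶ C₀) : Prop :=
  ∃ (N₀ : C) (_ : N₀ ∈ N) (f : N₀ ⟶ B) (h : C₀ ⟶ N₀⟦(1:ℤ)⟧),
    (Triangle.mk f g h ∈ distTriang C) ∧ FactorsThru N h

/-- Condition (Lex) on a morphism `h : C₀ ⟶ A⟦1⟧`. -/
def LexCond (N : Set C) {C₀ A : C} (h : C₀ ⟶ A⟦(1:ℤ)⟧) : Prop :=
  ∀ (N₀ : C), N₀ ∈ N → ∀ (x : N₀ ⟶ C₀), FactorsThru N (descShift (x ≫ h))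

/-- Condition (Rex) on a morphism `h : C₀ ⟶ A⟦1⟧`. -/
def RexCond (N : Set C) {C₀ A : C} (h : C₀ ⟶ A⟦(1:ℤ)⟧) : Prop :=
  ∀ (N₀ : C), N₀ ∈ N → ∀ (y : A ⟶ N₀),
    ∃ (M : C) (_ : M ∈ N) (u : C₀⟦(-1:ℤ)⟧ ⟶ M⟦(-1:ℤ)⟧) (v : M⟦(-1:ℤ)⟧ ⟶ N₀),
      descShift h ≫ y = u ≫ v

/-- `S_N` as a morphism property. -/
def SNProp (N : Set C) : MorphismProperty C := fun _ _ g => SN N g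

/-!
If `A ∈ N`, the triangle itself shows `g ∈ S_N`: `f` factors through `A`, and (Rex) applied
to `𝟙 A` makes `descShift h`, hence `h`, factor through `N`. If `C₀ ∈ N`, the inverse rotation
`C₀⟦-1⟧ ⟶ A ⟶ B ⟶ C₀⟦-1⟧⟦1⟧` has `f` as its middle map; its third map factors through `C₀`,
and its first map `-descShift h` factors through `N` by (Lex) applied to `𝟙 C₀`.
-/

namespace FactorsThru

variable {N : Set C} {X Y Z : C}

lemma of_mem_src (hX : X ∈ N) (f : X ⟶ Y) : FactorsThru N f :=
  ⟨X, hX, 𝟙 X, f, (Category.id_comp f).symm⟩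

lemma of_mem_tgt (hY : Y ∈ N) (f : X ⟶ Y) : FactorsThru N f :=
  ⟨Y, hY, f, 𝟙 Y, (Category.comp_id f).symm⟩

lemma comp {f : X ⟶ Y} (hf : FactorsThru N f) (g : Y ⟶ Z) : FactorsThru N (f ≫ g) := by
  obtain ⟨W, hW, u, v, rfl⟩ := hf
  exact ⟨W, hW, u, v ≫ g, Category.assoc u v g⟩

lemma neg {f : X ⟶ Y} (hf : FactorsThru N f) : FactorsThru N (-f) := by
  obtain ⟨W, hW, u, v, rfl⟩ := hf
  exact ⟨W, hW, -u, v, (Preadditive.neg_comp u v).symm⟩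

end FactorsThru

lemma eq_counitIso_inv_comp_shift_descShift {X A : C} (h : X ⟶ A⟦(1:ℤ)⟧) :
    h = (shiftEquiv C (1:ℤ)).counitIso.inv.app X ≫ (descShift h)⟦(1:ℤ)⟧' := by
  change h = (shiftFunctorCompIsoId C (-1) 1 (neg_add_cancel 1)).inv.app X ≫
    (h⟦(-1:ℤ)⟧' ≫ (shiftFunctorCompIsoId C 1 (-1) (add_neg_cancel 1)).hom.app A)⟦(1:ℤ)⟧'
  rw [Functor.map_comp, shift_shiftFunctorCompIsoId_add_neg_cancel_hom_app]
  exact (shiftFunctorCompIsoId_naturality_1 h _ _ _).symm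

/-- Shifting the factorization back by `1` makes `h` factor through `M⟦-1⟧⟦1⟧ ≅ M`. -/
lemma factorsThru_of_descShift_eq_comp {N : Set C}
    (hNiso : ∀ ⦃X Y : C⦄, (X ≅ Y) → X ∈ N → Y ∈ N)
    {X A M : C} (hM : M ∈ N) {h : X ⟶ A⟦(1:ℤ)⟧}
    (u : X⟦(-1:ℤ)⟧ ⟶ M⟦(-1:ℤ)⟧) (v : M⟦(-1:ℤ)⟧ ⟶ A) (huv : descShift h = u ≫ v) :
    FactorsThru N h := by
  refine ⟨M⟦(-1:ℤ)⟧⟦(1:ℤ)⟧, hNiso ((shiftEquiv C (1:ℤ)).counitIso.app M).symm hM,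
    (shiftEquiv C (1:ℤ)).counitIso.inv.app X ≫ u⟦(1:ℤ)⟧', v⟦(1:ℤ)⟧', ?_⟩
  rw [eq_counitIso_inv_comp_shift_descShift h, huv]
  exact (congrArg _ (Functor.map_comp _ _ _)).trans (Category.assoc _ _ _).symm

lemma sn_mor₂_of_mem_obj₁ {N : Set C} {A B C₀ : C} {f : A ⟶ B} {g : B ⟶ C₀}
    {h : C₀ ⟶ A⟦(1:ℤ)⟧} (hT : Triangle.mk f g h ∈ distTriang C) (hA : A ∈ N)
    (hh : FactorsThru N h) : SN N g :=
  ⟨A, f, h, hT, FactorsThru.of_mem_src hA f, hh⟩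

lemma sn_mor₁_of_mem_obj₃ {N : Set C} {A B C₀ : C} {f : A ⟶ B} {g : B ⟶ C₀}
    {h : C₀ ⟶ A⟦(1:ℤ)⟧} (hT : Triangle.mk f g h ∈ distTriang C) (hC₀ : C₀ ∈ N)
    (hh : FactorsThru N (descShift h)) : SN N f :=
  ⟨C₀⟦(-1:ℤ)⟧, -descShift h, g ≫ (shiftEquiv C (1:ℤ)).counitIso.inv.app C₀,
    inv_rot_of_distTriang _ hT, hh.neg,
    (FactorsThru.of_mem_tgt hC₀ g).comp ((shiftEquiv C (1:ℤ)).counitIso.inv.app C₀)⟩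

theorem stmt17 (N : Set C)
    (hNiso : ∀ ⦃X Y : C⦄, (X ≅ Y) → X ∈ N → Y ∈ N)
    {A B C₀ : C} (f : A ⟶ B) (g : B ⟶ C₀) (h : C₀ ⟶ A⟦(1:ℤ)⟧)
    (hT : Triangle.mk f g h ∈ distTriang C)
    (hLex : LexCond N h) (hRex : RexCond N h) :
    (A ∈ N → SN N g) ∧ (C₀ ∈ N → SN N f) := by
  constructor
  · intro hA
    obtain ⟨M, hM, u, v, huv⟩ := hRex A hA (𝟙 A)
    rw [Category.comp_id] at huv
    exact sn_mor₂_of_mem_obj₁ hT hA (factorsThru_of_descShift_eq_comp hNiso hM u v huv)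
  · intro hC₀
    have hh : FactorsThru N (descShift h) := by
      simpa only [Category.id_comp] using hLex C₀ hC₀ (𝟙 C₀)
    exact sn_mor₁_of_mem_obj₃ hT hC₀ hh
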